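/- arXiv:1703.05512 — 6 statements merged into one kernel-verified Lean document; each statement's English description precedes it below -/
import Mathlib

section
/- Let A be a 3×3 integer matrix with determinant 1 whose characteristic polynomial has a real root α with α > 1 and a non-real complex root β. Then there is no rational number q such that β = α^{-1/2}·exp(√-1·qπ). Equivalently, for every positive integer N, the complex number β^N is not real. -/
/-!
If `β ^ N` is real, then so is `β ^ M` for a multiple `M` of `N` with `μ := α ^ M ≥ 4`, and
`y := β ^ M = conj β ^ M`. The triple `μ, y, y` is the spectrum of `A ^ M`, so by Newton's
identities `e₁ = μ + 2y` and `e₂ = 2μy + y²` are integers, while `μy² = det A ^ M = 1`.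
Eliminating `y`, the integer `(e₂² - 2e₁)² - 4(e₁² - 2e₂)` equals `μ⁻⁴ - 4μ⁻¹`, which lies
strictly between `-1` and `0`.
-/

open Polynomial

theorem Polynomial.Monic.eq_X_sub_C_mul_X_sub_C_mul_X_sub_C {R : Type*} [CommRing R] [IsDomain R]
    {p : R[X]} (hp : p.Monic) (hdeg : p.natDegree = 3) {a b c : R}
    (hab : a ≠ b) (hac : a ≠ c) (hbc : b ≠ c) (ha : p.IsRoot a) (hb : p.IsRoot b)
    (hc : p.IsRoot c) : p = (X - C a) * (X - C b) * (X - C c) := by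
  have hroots : p.roots = {a, b, c} := by
    have hnodup : ({a, b, c} : Multiset R).Nodup := by simp [hab, hac, hbc]
    refine (Multiset.eq_of_le_of_card_le ((Multiset.le_iff_subset hnodup).2 ?_) ?_).symm
    · simpa [Multiset.cons_subset, hp.ne_zero] using ⟨ha, hb, hc⟩
    · simpa [hdeg] using p.card_roots'
  rw [← prod_multiset_X_sub_C_of_monic_of_roots_card_eq hp (by simp [hroots, hdeg]), hroots]
  simp [mul_assoc]

theorem Polynomial.Monic.vieta_of_natDegree_eq_three {R K : Type*} [CommRing R] [Field K]
    [Algebra R K] {p : R[X]} (hp : p.Monic) (hdeg : p.natDegree = 3) {a b c : K}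
    (hab : a ≠ b) (hac : a ≠ c) (hbc : b ≠ c) (ha : aeval a p = 0) (hb : aeval b p = 0)
    (hc : aeval c p = 0) :
    a + b + c = -algebraMap R K (p.coeff 2) ∧
      a * b + a * c + b * c = algebraMap R K (p.coeff 1) ∧
      a * b * c = -algebraMap R K (p.coeff 0) := by
  have hfactor := (hp.map (algebraMap R K)).eq_X_sub_C_mul_X_sub_C_mul_X_sub_C
    (by rw [hp.natDegree_map, hdeg]) hab hac hbc
    (by rwa [IsRoot, eval_map_algebraMap]) (by rwa [IsRoot, eval_map_algebraMap])
    (by rwa [IsRoot, eval_map_algebraMap])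
  have hcoeff (n : ℕ) :
      algebraMap R K (p.coeff n) = ((X - C a) * (X - C b) * (X - C c)).coeff n := by
    rw [← hfactor, coeff_map]
  refine ⟨?_, ?_, ?_⟩ <;> simp [hcoeff, mul_sub, sub_mul, coeff_X, coeff_C] <;> ring

theorem Matrix.vieta_charpoly_fin_three {R K : Type*} [CommRing R] [Field K] [Algebra R K]
    (A : Matrix (Fin 3) (Fin 3) R) {a b c : K}
    (hab : a ≠ b) (hac : a ≠ c) (hbc : b ≠ c) (ha : aeval a A.charpoly = 0)
    (hb : aeval b A.charpoly = 0) (hc : aeval c A.charpoly = 0) :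
    a + b + c = algebraMap R K A.trace ∧
      a * b + a * c + b * c = algebraMap R K (A.charpoly.coeff 1) ∧
      a * b * c = algebraMap R K A.det := by
  have := (algebraMap R K).domain_nontrivial
  obtain ⟨h₁, h₂, h₃⟩ := A.charpoly_monic.vieta_of_natDegree_eq_three
    (by rw [Matrix.charpoly_natDegree_eq_dim, Fintype.card_fin]) hab hac hbc ha hb hc
  refine ⟨?_, h₂, ?_⟩
  · simpa [A.trace_eq_neg_charpoly_coeff] using h₁
  · simpa [A.det_eq_sign_charpoly_coeff] using h₃.trans (by ring)

def HasIntElementarySymm {R : Type*} [CommRing R] (a b c : R) : Prop :=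
  ∃ e₁ e₂ e₃ : ℤ, a + b + c = e₁ ∧ a * b + a * c + b * c = e₂ ∧ a * b * c = e₃

namespace HasIntElementarySymm

variable {R : Type*} [CommRing R] {a b c : R}

theorem exists_intCast_eq_pow_add_pow_add_pow (h : HasIntElementarySymm a b c) :
    ∀ n : ℕ, ∃ m : ℤ, a ^ n + b ^ n + c ^ n = m
  | 0 => ⟨3, by norm_num⟩
  | 1 => by
    obtain ⟨e₁, -, -, h₁, -⟩ := h
    exact ⟨e₁, by simpa using h₁⟩
  | 2 => by
    obtain ⟨e₁, e₂, -, h₁, h₂, -⟩ := h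
    exact ⟨e₁ ^ 2 - 2 * e₂, by push_cast; linear_combination (a + b + c + e₁) * h₁ - 2 * h₂⟩
  | n + 3 => by
    obtain ⟨m₀, hm₀⟩ := h.exists_intCast_eq_pow_add_pow_add_pow n
    obtain ⟨m₁, hm₁⟩ := h.exists_intCast_eq_pow_add_pow_add_pow (n + 1)
    obtain ⟨m₂, hm₂⟩ := h.exists_intCast_eq_pow_add_pow_add_pow (n + 2)
    obtain ⟨e₁, e₂, e₃, h₁, h₂, h₃⟩ := h
    refine ⟨e₁ * m₂ - e₂ * m₁ + e₃ * m₀, ?_⟩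
    push_cast
    linear_combination (a ^ (n + 2) + b ^ (n + 2) + c ^ (n + 2)) * h₁
      - (a ^ (n + 1) + b ^ (n + 1) + c ^ (n + 1)) * h₂ + (a ^ n + b ^ n + c ^ n) * h₃
      + e₁ * hm₂ - e₂ * hm₁ + e₃ * hm₀

theorem mul_mul_mul (h : HasIntElementarySymm a b c) :
    HasIntElementarySymm (a * b) (a * c) (b * c) := by
  obtain ⟨e₁, e₂, e₃, h₁, h₂, h₃⟩ := h
  refine ⟨e₂, e₃ * e₁, e₃ ^ 2, h₂, ?_, ?_⟩
  · push_cast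
    linear_combination (a + b + c) * h₃ + e₃ * h₁
  · push_cast
    linear_combination (a * b * c + e₃) * h₃

theorem pow (h : HasIntElementarySymm a b c) (n : ℕ) :
    HasIntElementarySymm (a ^ n) (b ^ n) (c ^ n) := by
  obtain ⟨s, hs⟩ := h.exists_intCast_eq_pow_add_pow_add_pow n
  obtain ⟨t, ht⟩ := h.mul_mul_mul.exists_intCast_eq_pow_add_pow_add_pow n
  obtain ⟨-, -, e₃, -, -, h₃⟩ := h
  exact ⟨s, t, e₃ ^ n, hs, by simpa only [mul_pow] using ht, by simp [← mul_pow, h₃]⟩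

end HasIntElementarySymm

theorem not_hasIntElementarySymm_ofReal_of_four_le {μ : ℝ} (hμ : 4 ≤ μ) {y : ℂ}
    (hprod : μ * y * y = 1) : ¬ HasIntElementarySymm (μ : ℂ) y y := by
  rintro ⟨e₁, e₂, -, h₁, h₂, -⟩
  have hp₂ : (e₁ : ℂ) ^ 2 - 2 * e₂ = μ ^ 2 + 2 * y ^ 2 := by
    linear_combination -(μ + 2 * y + e₁) * h₁ + 2 * h₂
  have hq₂ : (e₂ : ℂ) ^ 2 - 2 * e₁ = 2 * μ + y ^ 4 := by
    linear_combination -(2 * μ * y + y * y + e₂) * h₂ + 2 * h₁ + (4 * μ + 4 * y) * hprod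
  set m : ℤ := (e₂ ^ 2 - 2 * e₁) ^ 2 - 4 * (e₁ ^ 2 - 2 * e₂) with hm
  have hmμ : (m : ℝ) * μ ^ 4 = 1 - 4 * μ ^ 3 := by
    have : (m : ℂ) * μ ^ 4 = 1 - 4 * μ ^ 3 := by
      rw [hm]
      push_cast
      rw [hp₂, hq₂]
      linear_combination (4 * μ ^ 3 * (μ * y ^ 2 + 1) + (μ ^ 3 * y ^ 6 + μ ^ 2 * y ^ 4
        + μ * y ^ 2 + 1) - 8 * μ ^ 3) * hprod
    exact_mod_cast this
  have hμ3 : 64 ≤ μ ^ 3 := by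
    calc (64 : ℝ) = 4 ^ 3 := by norm_num
      _ ≤ μ ^ 3 := by gcongr
  have hμ4 : 4 * μ ^ 3 ≤ μ ^ 4 := by
    rw [pow_succ μ 3, mul_comm _ μ]
    exact mul_le_mul_of_nonneg_right hμ (by linarith)
  rcases le_or_gt 0 m with hm0 | hm0
  · have : (0 : ℝ) ≤ m * μ ^ 4 := mul_nonneg (by exact_mod_cast hm0) (by positivity)
    linarith
  · have : (m : ℝ) * μ ^ 4 ≤ -1 * μ ^ 4 :=
      mul_le_mul_of_nonneg_right (by exact_mod_cast Int.le_sub_one_of_lt hm0) (by positivity)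
    linarith

/-- Let `A` be a `3×3` integer matrix with determinant `1` whose characteristic polynomial
has a real root `α > 1` and a non-real complex root `β`. Then there is no rational `q`
with `β = α^(-1/2) · exp(i q π)`; equivalently, `β ^ N` is non-real for every `N > 0`. -/
theorem stmt0 (A : Matrix (Fin 3) (Fin 3) ℤ) (hdet : A.det = 1)
    (α : ℝ) (hα : 1 < α) (hαroot : Polynomial.aeval α A.charpoly = 0)
    (β : ℂ) (hβroot : Polynomial.aeval β A.charpoly = 0) (hβ : β.im ≠ 0) :
    (∀ q : ℚ, β ≠ ((α ^ (-(1/2) : ℝ) : ℝ) : ℂ) * Complex.exp ((q : ℂ) * Real.pi * Complex.I))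
    ∧ (∀ N : ℕ, 0 < N → (β ^ N).im ≠ 0) := by
  have hαroot' : aeval (α : ℂ) A.charpoly = 0 := by
    simpa [hαroot] using aeval_algHom_apply Complex.ofRealHom.toIntAlgHom α A.charpoly
  have hβroot' : aeval (starRingEnd ℂ β) A.charpoly = 0 := by
    simpa [hβroot] using aeval_algHom_apply (starRingEnd ℂ).toIntAlgHom β A.charpoly
  obtain ⟨h₁, h₂, h₃⟩ := A.vieta_charpoly_fin_three
    (fun h => hβ (by simp [← h])) (fun h => hβ (by simpa using congr_arg Complex.im h))
    (fun h => hβ (Complex.conj_eq_iff_im.1 h.symm)) hαroot' hβroot hβroot'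
  have hsymm : HasIntElementarySymm (α : ℂ) β (starRingEnd ℂ β) := ⟨_, _, _, h₁, h₂, h₃⟩
  have hpow : ∀ N : ℕ, 0 < N → (β ^ N).im ≠ 0 := by
    intro N hN hreal
    obtain ⟨k, hk⟩ := pow_unbounded_of_one_lt 4 (one_lt_pow₀ hα hN.ne')
    have hconj : starRingEnd ℂ β ^ (N * k) = β ^ (N * k) := by
      rw [← map_pow, pow_mul, map_pow, Complex.conj_eq_iff_im.2 hreal]
    refine not_hasIntElementarySymm_ofReal_of_four_le (μ := α ^ (N * k)) (y := β ^ (N * k))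
      (by rw [pow_mul]; exact hk.le) ?_ ?_
    · rw [Complex.ofReal_pow, ← mul_pow, ← hconj, ← mul_pow, h₃, hdet]; simp
    · simpa [hconj] using hsymm.pow (N * k)
  refine ⟨fun q hq => hpow (2 * q.den) (by positivity) ?_, hpow⟩
  rw [hq, mul_pow, Complex.exp_rat_mul_pi_mul_I_pow_two_mul_den, mul_one, ← Complex.ofReal_pow,
    Complex.ofReal_im]
end

section
/- Let a, b ∈ ℤ and suppose the cubic polynomial x³ − a x² + b x − 1 has a real irrational root α and a non-real complex root β (so the third root is the complex conjugate β̄). If N is a positive integer with β^N = β̄^N (equivalently, β^N ∈ ℝ), then β^N is a rational integer and moreover α^N = β^N. -/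
/-- Integer coefficients expressing `x^n` in the basis `1, x, x²` modulo
`x³ - a x² + b x - 1`. -/
def pseq (a b : ℤ) : ℕ → ℤ × ℤ × ℤ
  | 0 => (1, 0, 0)
  | n+1 =>
    let p := pseq a b n
    (p.2.2, p.1 - b * p.2.2, p.2.1 + a * p.2.2)

lemma pseq_spec (a b : ℤ) (x : ℂ)
    (hx : x ^ 3 - (a : ℂ) * x ^ 2 + (b : ℂ) * x - 1 = 0) (n : ℕ) :
    x ^ n = ((pseq a b n).1 : ℂ) + ((pseq a b n).2.1 : ℂ) * x
      + ((pseq a b n).2.2 : ℂ) * x ^ 2 := by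
  induction n with
  | zero => simp [pseq]
  | succ n ih =>
    have h2 : x ^ (n+1) = x ^ n * x := by ring
    rw [h2, ih]
    simp only [pseq]
    push_cast
    linear_combination ((pseq a b n).2.2 : ℂ) * hx

/-- Let `a, b ∈ ℤ` and suppose `x³ − a x² + b x − 1` has a real irrational root `α` and a
non-real complex root `β`. If `N > 0` and `β ^ N = conj β ^ N` (i.e. `β ^ N` is real),
then `β ^ N` is a rational integer and `α ^ N = β ^ N`. -/
theorem stmt1 (a b : ℤ) (α : ℝ) (hαirr : Irrational α)
    (hαroot : α ^ 3 - (a : ℝ) * α ^ 2 + (b : ℝ) * α - 1 = 0)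
    (β : ℂ) (hβ : β.im ≠ 0)
    (hβroot : β ^ 3 - (a : ℂ) * β ^ 2 + (b : ℂ) * β - 1 = 0)
    (N : ℕ) (hN : 0 < N) (hreal : β ^ N = (starRingEnd ℂ) β ^ N) :
    (∃ z : ℤ, β ^ N = (z : ℂ)) ∧ ((α : ℂ)) ^ N = β ^ N := by
  set γ := (starRingEnd ℂ) β with hγdef
  have hαc : (α : ℂ) ^ 3 - (a : ℂ) * (α : ℂ) ^ 2 + (b : ℂ) * (α : ℂ) - 1 = 0 := by
    have := congrArg (Complex.ofReal) hαroot
    push_cast at this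
    convert this using 1
  have hγroot : γ ^ 3 - (a : ℂ) * γ ^ 2 + (b : ℂ) * γ - 1 = 0 := by
    have := congrArg (starRingEnd ℂ) hβroot
    simpa [map_sub, map_add, map_mul, map_pow] using this
  have hγim : γ.im = -β.im := Complex.conj_im β
  have hβγ : β ≠ γ := by
    intro h
    apply hβ
    have : β.im = -β.im := by rw [← hγim, ← h]
    linarith
  have hαβ : (α : ℂ) ≠ β := by
    intro h
    apply hβ
    rw [← h]
    simp
  have hαγ : (α : ℂ) ≠ γ := by
    intro h
    apply hβ
    have : γ.im = 0 := by rw [← h]; simp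
    rw [hγim] at this; linarith
  -- symmetric relations
  have E2 : (α : ℂ) ^ 2 + (α : ℂ) * β + β ^ 2 - (a : ℂ) * ((α : ℂ) + β) + b = 0 := by
    have key : ((α : ℂ) - β) *
        ((α : ℂ) ^ 2 + (α : ℂ) * β + β ^ 2 - (a : ℂ) * ((α : ℂ) + β) + b) = 0 := by
      linear_combination hαc - hβroot
    rcases mul_eq_zero.mp key with h | h
    · exact absurd (sub_eq_zero.mp h) hαβ
    · exact h
  have E1 : β ^ 2 + β * γ + γ ^ 2 - (a : ℂ) * (β + γ) + b = 0 := by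
    have key : (β - γ) *
        (β ^ 2 + β * γ + γ ^ 2 - (a : ℂ) * (β + γ) + b) = 0 := by
      linear_combination hβroot - hγroot
    rcases mul_eq_zero.mp key with h | h
    · exact absurd (sub_eq_zero.mp h) hβγ
    · exact h
  have e1 : (α : ℂ) + β + γ = a := by
    have key : (γ - (α : ℂ)) * ((α : ℂ) + β + γ - a) = 0 := by
      linear_combination E1 - E2
    rcases mul_eq_zero.mp key with h | h
    · exact absurd (sub_eq_zero.mp h).symm hαγ
    · linear_combination h
  have hαpow := pseq_spec a b (α : ℂ) hαc N
  have hβpow := pseq_spec a b β hβroot N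
  have hγpow := pseq_spec a b γ hγroot N
  rcases hpq : pseq a b N with ⟨A, B, C⟩
  rw [hpq] at hαpow hβpow hγpow
  simp only at hαpow hβpow hγpow
  have key2 : (β - γ) * ((B : ℂ) + (C : ℂ) * (β + γ)) = 0 := by
    linear_combination hreal - hβpow + hγpow
  have hBC : (B : ℂ) + (C : ℂ) * (β + γ) = 0 := by
    rcases mul_eq_zero.mp key2 with h | h
    · exact absurd (sub_eq_zero.mp h) hβγ
    · exact h
  have hsum : β + γ = (a : ℂ) - (α : ℂ) := by linear_combination e1
  rw [hsum] at hBC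
  have hC0 : C = 0 := by
    by_contra hCne
    have hCc : (C : ℂ) ≠ 0 := by exact_mod_cast hCne
    have hαeq : (C : ℂ) * (α : ℂ) = (B : ℂ) + (C : ℂ) * a := by
      linear_combination -hBC
    have hαreal : (C : ℝ) * α = (B : ℝ) + (C : ℝ) * (a : ℝ) := by
      have h2 : (((C : ℝ) * α : ℝ) : ℂ) = (((B : ℝ) + (C : ℝ) * (a : ℝ) : ℝ) : ℂ) := by
        push_cast
        linear_combination hαeq
      exact_mod_cast h2
    have hCr : (C : ℝ) ≠ 0 := by exact_mod_cast hCne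
    have hval : α = ((((B + C * a : ℤ) : ℚ) / ((C : ℤ) : ℚ) : ℚ) : ℝ) := by
      push_cast
      field_simp
      linear_combination hαreal
    exact Rat.not_irrational _ (hval ▸ hαirr)
  have hB0 : B = 0 := by
    have h3 : (B : ℂ) = 0 := by
      rw [hC0] at hBC
      push_cast at hBC
      linear_combination hBC
    exact_mod_cast h3
  rw [hB0, hC0] at hβpow hαpow
  push_cast at hβpow hαpow
  constructor
  · exact ⟨A, by rw [hβpow]; ring⟩
  · rw [hαpow, hβpow]; ring
end

section
/- Let K be a number field having exactly two non-real embeddings into ℂ, and let τ : K → ℂ be one of them. Assume that the only intermediate field ℚ ⊆ T ⊆ K which is totally real is T = ℚ. If x ∈ K satisfies τ(x) ∈ ℝ, then x ∈ ℚ. -/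
/-!
The elements of `K` that `τ` sends into `ℝ` form an intermediate field `T`. Every embedding of
`T` into `ℂ` extends to an embedding `ψ` of `K`. Two non-real embeddings of `K` mean a single
complex place, so `ψ` is real, or `ψ` is `τ` or its conjugate; in each case `ψ` maps `T` into `ℝ`.
Hence `T` is totally real, so `T = ℚ`, and `x ∈ T`.
-/

open NumberField

namespace NumberField.ComplexEmbedding

variable {K : Type*} [Field K]

lemma im_eq_zero_of_isReal {φ : K →+* ℂ} (hφ : IsReal φ) (x : K) : (φ x).im = 0 := by
  rw [← hφ.coe_embedding_apply]
  exact Complex.ofReal_im _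

lemma eq_or_eq_conjugate_of_card_eq_two [NumberField K]
    (hcard : Nat.card {σ : K →+* ℂ // ¬ IsReal σ} = 2)
    {τ ψ : K →+* ℂ} (hτ : ¬ IsReal τ) (hψ : ¬ IsReal ψ) : ψ = τ ∨ ψ = conjugate τ := by
  classical
  have hplaces : InfinitePlace.nrComplexPlaces K = 1 := by
    have := InfinitePlace.card_complex_embeddings (K := K)
    rw [← Nat.card_eq_fintype_card, hcard] at this
    omega
  have hmk : InfinitePlace.mk τ = InfinitePlace.mk ψ :=
    congrArg Subtype.val <| Fintype.card_le_one_iff.mp hplaces.le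
      ⟨_, InfinitePlace.isComplex_mk_iff.mpr hτ⟩ ⟨_, InfinitePlace.isComplex_mk_iff.mpr hψ⟩
  rcases InfinitePlace.mk_eq_iff.mp hmk with h | h
  · exact .inl h.symm
  · exact .inr h.symm

noncomputable def realPreimage [CharZero K] (τ : K →+* ℂ) : IntermediateField ℚ K :=
  (Complex.ofRealHom.fieldRange.comap τ).toIntermediateField fun q => ⟨q, by simp⟩

lemma mem_realPreimage [CharZero K] {τ : K →+* ℂ} {x : K} :
    x ∈ realPreimage τ ↔ (τ x).im = 0 := by
  refine ⟨?_, fun h => ⟨(τ x).re, Complex.ext (by simp) (by simp [h])⟩⟩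
  rintro ⟨r, hr⟩
  simp [← hr]

lemma im_embedding_realPreimage_eq_zero [NumberField K]
    (hcard : Nat.card {σ : K →+* ℂ // ¬ IsReal σ} = 2) {τ : K →+* ℂ} (hτ : ¬ IsReal τ)
    (φ : realPreimage τ →+* ℂ) (y : realPreimage τ) : (φ y).im = 0 := by
  have hy : (τ y).im = 0 := mem_realPreimage.mp y.2
  rw [← lift_algebraMap_apply K φ y]
  by_cases hψ : IsReal (lift K φ)
  · exact im_eq_zero_of_isReal hψ _
  · rcases eq_or_eq_conjugate_of_card_eq_two hcard hτ hψ with h | h <;> simp [h, hy]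

end NumberField.ComplexEmbedding

/-- Let `K` be a number field with exactly two non-real embeddings into `ℂ`, let `τ` be one
of them, and assume the only totally real intermediate field of `K/ℚ` is `ℚ` itself.
If `x ∈ K` satisfies `τ x ∈ ℝ`, then `x ∈ ℚ`. -/
theorem stmt4 (K : Type*) [Field K] [NumberField K]
    (hcard : Nat.card {σ : K →+* ℂ // ¬ NumberField.ComplexEmbedding.IsReal σ} = 2)
    (τ : K →+* ℂ) (hτ : ¬ NumberField.ComplexEmbedding.IsReal τ)
    (htr : ∀ T : IntermediateField ℚ K,
      (∀ φ : T →+* ℂ, ∀ y : T, (φ y).im = 0) → T = ⊥)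
    (x : K) (hx : (τ x).im = 0) :
    x ∈ (⊥ : IntermediateField ℚ K) := by
  rw [← htr _ (ComplexEmbedding.im_embedding_realPreimage_eq_zero hcard hτ)]
  exact ComplexEmbedding.mem_realPreimage.mpr hx
end

section
/- Let K be a number field with exactly s real embeddings, s ≥ 1, and exactly two (conjugate) non-real embeddings into ℂ, and assume that the only intermediate field ℚ ⊆ T ⊆ K which is totally real is T = ℚ. Then every totally positive unit u of the ring of integers 𝒪_K with u ≠ 1 satisfies ℚ(u) = K; equivalently, the minimal polynomial of u over ℚ has degree [K : ℚ] = s + 2. -/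
/-!
If `ℚ(u) ≠ K`, then `ℚ(u)` is totally real: a non-real embedding of `ℚ(u)` has `[K : ℚ(u)] ≥ 2`
extensions to `K`, and their complex conjugates are `[K : ℚ(u)]` further ones, all non-real,
whereas `K` has only two non-real embeddings. By hypothesis `ℚ(u) = ℚ`, so `u`
is a rational unit of `ℤ`, i.e. `±1`, and positivity at a real embedding forces `u = 1`.
-/

open NumberField NumberField.ComplexEmbedding

theorem Rat.eq_one_of_isIntegral_of_isIntegral_inv {q : ℚ} (hq : 0 < q) (h : IsIntegral ℤ q)
    (h' : IsIntegral ℤ q⁻¹) : q = 1 := by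
  obtain ⟨n, rfl⟩ := IsIntegrallyClosed.isIntegral_iff.mp h
  obtain ⟨m, hm⟩ := IsIntegrallyClosed.isIntegral_iff.mp h'
  have hnm : n * m = 1 := by
    have : (n : ℚ) ≠ 0 := hq.ne'
    exact_mod_cast (show (n : ℚ) * m = 1 by simp_all)
  have hn : 0 < n := by simpa using hq
  simp [Int.eq_one_of_mul_eq_one_right hn.le hnm]

theorem NumberField.Units.eq_one_of_mem_bot {K : Type*} [Field K] [NumberField K] {u : (𝓞 K)ˣ}
    (hu : algebraMap (𝓞 K) K u ∈ (⊥ : IntermediateField ℚ K)) {σ : K →+* ℂ}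
    (hσ : 0 < (σ (algebraMap (𝓞 K) K u)).re) : u = 1 := by
  obtain ⟨q, hq⟩ := IntermediateField.mem_bot.mp hu
  have hint (v : (𝓞 K)ˣ) : IsIntegral ℤ (algebraMap (𝓞 K) K v) := RingOfIntegers.isIntegral_coe _
  have hq1 : q = 1 := by
    refine Rat.eq_one_of_isIntegral_of_isIntegral_inv (by simpa [← hq] using hσ) ?_ ?_
    · exact (isIntegral_algebraMap_iff (algebraMap ℚ K).injective).mp (hq ▸ hint u)
    · refine (isIntegral_algebraMap_iff (algebraMap ℚ K).injective).mp ?_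
      simpa [map_inv₀, hq] using hint u⁻¹
  ext
  simp [← hq, hq1]

theorem NumberField.ComplexEmbedding.two_mul_finrank_le_card_not_isReal {k K : Type*} [Field k]
    [Field K] [NumberField K] [Algebra k K] [FiniteDimensional k K] [Algebra.IsSeparable k K]
    {ψ : k →+* ℂ} (hψ : ¬IsReal ψ) :
    2 * Module.finrank k K ≤ Nat.card {φ : K →+* ℂ // ¬IsReal φ} := by
  let := ψ.toAlgebra
  have hover (σ : K →ₐ[k] ℂ) : (σ : K →+* ℂ).comp (algebraMap k K) = ψ := σ.comp_algebraMap
  have hnotReal (σ : K →ₐ[k] ℂ) : ¬IsReal (σ : K →+* ℂ) := fun h => hψ (hover σ ▸ h.comp _)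
  have hne (σ τ : K →ₐ[k] ℂ) : (σ : K →+* ℂ) ≠ conjugate τ := fun h => by
    have h' := hover σ
    rw [h, conjugate_comp, hover τ] at h'
    exact hψ (isReal_iff.mpr h')
  let f : (K →ₐ[k] ℂ) ⊕ (K →ₐ[k] ℂ) → {φ : K →+* ℂ // ¬IsReal φ} :=
    Sum.elim (fun σ => ⟨σ, hnotReal σ⟩)
      (fun σ => ⟨conjugate σ, isReal_conjugate_iff.not.mpr (hnotReal σ)⟩)
  have hf : Function.Injective f := by
    rintro (σ | σ) (τ | τ) h <;> simp only [f, Sum.elim_inl, Sum.elim_inr, Subtype.mk.injEq] at h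
    · rw [AlgHom.coe_ringHom_injective h]
    · exact absurd h (hne σ τ)
    · exact absurd h.symm (hne τ σ)
    · rw [AlgHom.coe_ringHom_injective ((involutive_conjugate K).injective h)]
  calc 2 * Module.finrank k K = Nat.card ((K →ₐ[k] ℂ) ⊕ (K →ₐ[k] ℂ)) := by
        rw [Nat.card_sum, Nat.card_eq_fintype_card, AlgHom.card]; ring
    _ ≤ _ := Nat.card_le_card_of_injective f hf

theorem NumberField.ComplexEmbedding.isReal_of_ne_top {K : Type*} [Field K] [NumberField K]
    (hK : Nat.card {φ : K →+* ℂ // ¬IsReal φ} ≤ 2) {T : IntermediateField ℚ K} (hT : T ≠ ⊤)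
    (ψ : T →+* ℂ) : IsReal ψ := by
  by_contra hψ
  have h1 : Module.finrank T K ≠ 1 := IntermediateField.finrank_eq_one_iff_eq_top.not.mpr hT
  have := two_mul_finrank_le_card_not_isReal (K := K) hψ
  have : 0 < Module.finrank T K := Module.finrank_pos
  omega

theorem NumberField.finrank_eq_card_isReal_add_card_not_isReal (K : Type*) [Field K]
    [NumberField K] : Module.finrank ℚ K =
      Nat.card {φ : K →+* ℂ // IsReal φ} + Nat.card {φ : K →+* ℂ // ¬IsReal φ} := by
  classical
  simp only [Nat.card_eq_fintype_card, InfinitePlace.card_real_embeddings,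
    InfinitePlace.card_complex_embeddings, InfinitePlace.card_add_two_mul_card_eq_rank]

/-- Let `K` be a number field with exactly `s ≥ 1` real embeddings and exactly two
non-real embeddings into `ℂ`, whose only totally real intermediate field is `ℚ`.
Then every totally positive unit `u ≠ 1` of `𝓞 K` satisfies `ℚ(u) = K`; equivalently,
the minimal polynomial of `u` over `ℚ` has degree `[K : ℚ] = s + 2`. -/
theorem stmt5 (K : Type*) [Field K] [NumberField K] (s : ℕ) (hs : 1 ≤ s)
    (hreal : Nat.card {σ : K →+* ℂ // NumberField.ComplexEmbedding.IsReal σ} = s)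
    (hnonreal : Nat.card {σ : K →+* ℂ // ¬ NumberField.ComplexEmbedding.IsReal σ} = 2)
    (htr : ∀ T : IntermediateField ℚ K,
      (∀ φ : T →+* ℂ, ∀ y : T, (φ y).im = 0) → T = ⊥)
    (u : (𝓞 K)ˣ) (hu1 : u ≠ 1)
    (hupos : ∀ σ : K →+* ℂ, NumberField.ComplexEmbedding.IsReal σ →
      0 < (σ (algebraMap (𝓞 K) K (u : 𝓞 K))).re) :
    IntermediateField.adjoin ℚ ({algebraMap (𝓞 K) K (u : 𝓞 K)} : Set K) = ⊤ ∧
      (minpoly ℚ (algebraMap (𝓞 K) K (u : 𝓞 K))).natDegree = Module.finrank ℚ K ∧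
      Module.finrank ℚ K = s + 2 := by
  set x : K := algebraMap (𝓞 K) K (u : 𝓞 K)
  obtain ⟨⟨σ, hσ⟩⟩ : Nonempty {σ : K →+* ℂ // IsReal σ} := (Nat.card_pos_iff.mp (by omega)).1
  have htop : IntermediateField.adjoin ℚ {x} = ⊤ := by
    by_contra hne
    have htotReal (φ : IntermediateField.adjoin ℚ {x} →+* ℂ) (y) : (φ y).im = 0 :=
      Complex.conj_eq_iff_im.mp (RingHom.congr_fun (isReal_of_ne_top hnonreal.le hne φ) y)
    have hx : x ∈ (⊥ : IntermediateField ℚ K) :=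
      htr _ htotReal ▸ IntermediateField.mem_adjoin_simple_self ℚ x
    exact hu1 (Units.eq_one_of_mem_bot hx (hupos σ hσ))
  refine ⟨htop, ?_, ?_⟩
  · rw [← IntermediateField.adjoin.finrank (IsIntegral.of_finite ℚ x), htop,
      IntermediateField.finrank_top']
  · rw [finrank_eq_card_isReal_add_card_not_isReal, hreal, hnonreal]
end

section
/- Let K be a number field with exactly s real embeddings, s ≥ 1, and exactly two (conjugate) non-real embeddings into ℂ, and assume that the only intermediate field ℚ ⊆ T ⊆ K which is totally real is T = ℚ. Let u be a totally positive unit of the ring of integers 𝒪_K with u ≠ 1, and let τ : K → ℂ be one of the non-real embeddings. Then for every positive integer N, the complex number τ(u)^N is not real; equivalently, the argument of τ(u) is not a rational multiple of π. -/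
/-!
If `τ(u)^N` were real, then `u^N` would be real under every embedding, because the only
non-real embeddings are `τ` and its conjugate. Hence `ℚ(u^N)` is totally real, so it is `ℚ`, and
the rational unit `u^N` has absolute value `1`. Under a real embedding `u` is positive, so its
image is a positive real whose `N`-th power has absolute value `1`; it is `1`, and so is `u`.
-/

open NumberField NumberField.ComplexEmbedding

namespace NumberField.ComplexEmbedding

variable {K : Type*} [Field K]

lemma IsReal.im_eq_zero {σ : K →+* ℂ} (hσ : IsReal σ) (x : K) : (σ x).im = 0 := by
  rw [← hσ.coe_embedding_apply]
  exact Complex.ofReal_im _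

lemma eq_or_eq_conjugate_of_card_not_isReal_eq_two
    (h : Nat.card {σ : K →+* ℂ // ¬IsReal σ} = 2) {τ σ : K →+* ℂ}
    (hτ : ¬IsReal τ) (hσ : ¬IsReal σ) : σ = τ ∨ σ = conjugate τ := by
  obtain ⟨ρ, -, hρ⟩ := (Nat.card_eq_two_iff' (⟨τ, hτ⟩ : {σ : K →+* ℂ // ¬IsReal σ})).mp h
  have hconj : (⟨conjugate τ, isReal_conjugate_iff.not.mpr hτ⟩ : {σ // ¬IsReal σ}) ≠ ⟨τ, hτ⟩ :=
    fun he ↦ hτ (isReal_iff.mpr (congrArg Subtype.val he))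
  by_cases hστ : σ = τ
  · exact .inl hστ
  · right
    have hσρ := hρ ⟨σ, hσ⟩ (fun he ↦ hστ (congrArg Subtype.val he))
    exact congrArg Subtype.val (hσρ.trans (hρ _ hconj).symm)

lemma im_eq_zero_of_card_not_isReal_eq_two
    (h : Nat.card {σ : K →+* ℂ // ¬IsReal σ} = 2) {τ : K →+* ℂ} (hτ : ¬IsReal τ)
    {x : K} (hx : (τ x).im = 0) (σ : K →+* ℂ) : (σ x).im = 0 := by
  by_cases hσ : IsReal σ
  · exact hσ.im_eq_zero x
  rcases eq_or_eq_conjugate_of_card_not_isReal_eq_two h hτ hσ with rfl | rfl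
  · exact hx
  · rw [conjugate_coe_eq, Complex.conj_im, hx, neg_zero]

lemma im_eq_zero_of_mem_adjoin [CharZero K] {S : Set K} {σ : K →+* ℂ} (hS : ∀ y ∈ S, (σ y).im = 0)
    {z : K} (hz : z ∈ IntermediateField.adjoin ℚ S) : (σ z).im = 0 := by
  induction hz using IntermediateField.adjoin_induction with
  | mem y hy => exact hS y hy
  | algebraMap q => simp
  | add _ _ _ _ hx hy => simp [hx, hy]
  | inv _ _ hx => simp [hx]
  | mul _ _ _ _ hx hy => simp [hx, hy]

lemma im_eq_zero_of_forall_im_eq_zero [NumberField K] {S : Set K}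
    (hS : ∀ σ : K →+* ℂ, ∀ y ∈ S, (σ y).im = 0) (φ : IntermediateField.adjoin ℚ S →+* ℂ)
    (z : IntermediateField.adjoin ℚ S) : (φ z).im = 0 := by
  rw [← lift_algebraMap_apply K φ z]
  exact im_eq_zero_of_mem_adjoin (hS _) z.2

end NumberField.ComplexEmbedding

namespace NumberField.Units

variable {K : Type*} [Field K] [NumberField K]

lemma abs_eq_one_of_coe_eq_algebraMap (w : (𝓞 K)ˣ) {q : ℚ} (h : (w : K) = algebraMap ℚ K q) :
    |q| = 1 := by
  have hnorm := Units.norm K w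
  rw [h, Algebra.norm_algebraMap, abs_pow] at hnorm
  exact (pow_eq_one_iff_of_nonneg (abs_nonneg q) Module.finrank_pos.ne').mp hnorm

lemma eq_one_of_pow_eq_algebraMap {u : (𝓞 K)ˣ} {σ : K →+* ℂ} (hσ : IsReal σ)
    (hpos : 0 < (σ u).re) {N : ℕ} (hN : N ≠ 0) {q : ℚ} (h : (u : K) ^ N = algebraMap ℚ K q) :
    u = 1 := by
  set ρ := hσ.embedding
  have hρ : ρ u ^ N = q := by rw [← map_pow, h, eq_ratCast, map_ratCast]
  have habs : |ρ u| ^ N = 1 := by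
    rw [← abs_pow, hρ]
    exact_mod_cast abs_eq_one_of_coe_eq_algebraMap (u ^ N) (by rwa [coe_pow])
  have hρu : ρ u = ρ 1 := by
    rw [map_one, ← (pow_eq_one_iff_of_nonneg (abs_nonneg _) hN).mp habs, abs_of_pos (show 0 < ρ u from hpos)]
  exact coe_injective K (ρ.injective hρu)

end NumberField.Units

/-- Let `K` be a number field with exactly `s ≥ 1` real embeddings and exactly two
non-real embeddings into `ℂ`, whose only totally real intermediate field is `ℚ`.
Let `u ≠ 1` be a totally positive unit of `𝓞 K` and let `τ` be a non-real embedding.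
Then `τ(u) ^ N` is non-real for every positive integer `N`; equivalently, the argument
of `τ(u)` is not a rational multiple of `π`. -/
theorem stmt6 (K : Type*) [Field K] [NumberField K] (s : ℕ) (hs : 1 ≤ s)
    (hreal : Nat.card {σ : K →+* ℂ // NumberField.ComplexEmbedding.IsReal σ} = s)
    (hnonreal : Nat.card {σ : K →+* ℂ // ¬ NumberField.ComplexEmbedding.IsReal σ} = 2)
    (htr : ∀ T : IntermediateField ℚ K,
      (∀ φ : T →+* ℂ, ∀ y : T, (φ y).im = 0) → T = ⊥)
    (u : (𝓞 K)ˣ) (hu1 : u ≠ 1)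
    (hupos : ∀ σ : K →+* ℂ, NumberField.ComplexEmbedding.IsReal σ →
      0 < (σ (algebraMap (𝓞 K) K (u : 𝓞 K))).re)
    (τ : K →+* ℂ) (hτ : ¬ NumberField.ComplexEmbedding.IsReal τ) :
    ∀ N : ℕ, 0 < N → ((τ (algebraMap (𝓞 K) K (u : 𝓞 K))) ^ N).im ≠ 0 := by
  intro N hN hτN
  have hreal_pow : ∀ σ : K →+* ℂ, ∀ y ∈ ({(u : K) ^ N} : Set K), (σ y).im = 0 := by
    rintro σ _ rfl
    exact im_eq_zero_of_card_not_isReal_eq_two hnonreal hτ (by rwa [map_pow]) σ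
  have hbot := htr _ (im_eq_zero_of_forall_im_eq_zero hreal_pow)
  obtain ⟨q, hq⟩ := IntermediateField.mem_bot.mp
    (hbot ▸ IntermediateField.mem_adjoin_simple_self ℚ ((u : K) ^ N))
  obtain ⟨⟨σ, hσ⟩⟩ := (Nat.card_pos_iff.mp (hreal ▸ hs)).1
  exact hu1 (Units.eq_one_of_pow_eq_algebraMap hσ (hupos σ hσ) hN.ne' hq.symm)
end

section
/- The Galois group of the polynomial X⁴ − X − 1 over ℚ (that is, the Galois group of its splitting field over ℚ) is isomorphic to the symmetric group S₄. -/
/-!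
The Galois group `G` of `f = X⁴ - X - 1` acts faithfully on the four complex roots `a, b, c, d`.
As `f` is irreducible, `4 ∣ |G|`; and `ab + cd` is a root of the resolvent cubic `X³ + 4X - 1`,
which has no rational root, so `3 ∣ |G|` as well. Hence `G` has index at most `2` in `S₄`.
Complex conjugation acts on the roots as a transposition, so `G` is not `A₄`: `f` has a real root
(intermediate value theorem) but not four, since the roots have square sum
`(Σ a)² - 2 Σ ab = 0` and are nonzero.
-/

open Polynomial

namespace Equiv.Perm

theorem eq_top_of_index_le_two_of_isSwap_mem {α : Type*} [Fintype α] [DecidableEq α]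
    {G : Subgroup (Perm α)} (hG : G.index ≤ 2) {τ : Perm α} (hτ : τ.IsSwap)
    (hτG : τ ∈ G) : G = ⊤ := by
  by_contra hne
  have hindex : G.index = 2 := by
    have := G.index_ne_zero_of_finite
    have := mt Subgroup.index_eq_one.mp hne
    omega
  have hτA : τ ∈ alternatingGroup α := eq_alternatingGroup_of_index_eq_two hindex ▸ hτG
  rw [mem_alternatingGroup, hτ.sign_eq] at hτA
  exact absurd hτA (by decide)

end Equiv.Perm

section DepressedQuartic

variable {R : Type*} [CommRing R] {p q a b c d : R}

theorem depressed_quartic_vieta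
    (h : X ^ 4 + C p * X + C q = (X - C a) * (X - C b) * (X - C c) * (X - C d)) :
    a + b + c + d = 0 ∧ a * b + a * c + a * d + b * c + b * d + c * d = 0 ∧
      a * b * c + a * b * d + a * c * d + b * c * d = -p ∧ a * b * c * d = q := by
  have hexpand : (X - C a) * (X - C b) * (X - C c) * (X - C d) =
      X ^ 4 - C (a + b + c + d) * X ^ 3 +
        C (a * b + a * c + a * d + b * c + b * d + c * d) * X ^ 2 -
        C (a * b * c + a * b * d + a * c * d + b * c * d) * X + C (a * b * c * d) := by
    simp only [map_add, map_mul]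
    ring
  rw [hexpand] at h
  have h3 := congrArg (coeff · 3) h
  have h2 := congrArg (coeff · 2) h
  have h1 := congrArg (coeff · 1) h
  have h0 := congrArg (coeff · 0) h
  simp only [coeff_add, coeff_sub, coeff_C_mul, coeff_X_pow, coeff_X, coeff_C] at h3 h2 h1 h0
  norm_num at h3 h2 h1 h0
  exact ⟨by linear_combination h3, by linear_combination -h2, by linear_combination h1, h0.symm⟩

theorem depressed_quartic_resolvent
    (h : X ^ 4 + C p * X + C q = (X - C a) * (X - C b) * (X - C c) * (X - C d)) :
    (a * b + c * d) ^ 3 - 4 * q * (a * b + c * d) - p ^ 2 = 0 := by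
  obtain ⟨he1, he2, he3, he4⟩ := depressed_quartic_vieta h
  linear_combination
    ((a + b + c + d) * (a * b * c * d) -
        (a * b * c + a * b * d + a * c * d + b * c * d) * (a * b + c * d)) * he1 +
      ((a * b + c * d) ^ 2 - 4 * (a * b * c * d)) * he2 +
      (a * b * c + a * b * d + a * c * d + b * c * d - p) * he3 + 4 * (a * b + c * d) * he4

end DepressedQuartic

theorem Polynomial.Splits.exists_eq_mul_X_sub_C_of_natDegree_eq_four {K : Type*} [Field K]
    {f : K[X]} (hf : f.Splits) (hm : f.Monic) (hdeg : f.natDegree = 4) :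
    ∃ a b c d, f = (X - C a) * (X - C b) * (X - C c) * (X - C d) := by
  obtain ⟨a, b, c, d, hroots⟩ :=
    Multiset.card_eq_four.mp (hdeg ▸ hf.natDegree_eq_card_roots).symm
  refine ⟨a, b, c, d, ?_⟩
  rw [hf.eq_prod_roots_of_monic hm, hroots]
  simp only [Multiset.insert_eq_cons, Multiset.map_cons, Multiset.prod_cons,
    Multiset.map_singleton, Multiset.prod_singleton]
  ring

theorem not_splits_depressed_quartic_real {p q : ℝ} (hq : q ≠ 0) :
    ¬ (X ^ 4 + C p * X + C q).Splits := by
  intro hs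
  obtain ⟨a, b, c, d, h⟩ := hs.exists_eq_mul_X_sub_C_of_natDegree_eq_four
    (by monicity!) (by compute_degree!)
  obtain ⟨he1, he2, -, he4⟩ := depressed_quartic_vieta h
  have hsq : a ^ 2 + b ^ 2 + c ^ 2 + d ^ 2 = 0 := by
    linear_combination (a + b + c + d) * he1 - 2 * he2
  have ha : a = 0 := by nlinarith [sq_nonneg a, sq_nonneg b, sq_nonneg c, sq_nonneg d]
  exact hq (by rw [← he4, ha]; ring)

theorem Polynomial.splits_of_natDegree_le_card_rootSet {F K : Type*} [Field F] [Field K]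
    [Algebra F K] {p : F[X]} (h : p.natDegree ≤ Fintype.card (p.rootSet K)) :
    (p.map (algebraMap F K)).Splits := by
  classical
  rw [splits_iff_card_roots, natDegree_map]
  simp_rw [rootSet_def, Finset.coe_sort_coe, Fintype.card_coe] at h
  exact le_antisymm (card_roots_map_le_natDegree p)
    (h.trans (Multiset.toFinset_card_le _))

theorem Polynomial.Irreducible.natDegree_dvd_finrank_of_aeval_eq_zero {K L : Type*} [Field K]
    [Field L] [Algebra K L] [FiniteDimensional K L] {p : K[X]} (hp : Irreducible p) {x : L}
    (hx : aeval x p = 0) : p.natDegree ∣ Module.finrank K L := by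
  rw [minpoly.Irreducible.eq_minpoly hp hx,
    natDegree_C_mul (leadingCoeff_ne_zero.mpr hp.ne_zero)]
  exact minpoly.degree_dvd (.of_finite K x)

namespace Polynomial.Gal

attribute [local instance] splits_ℚ_ℂ

theorem isSwap_galActionHom_conj {p : ℚ[X]}
    (h1 : Fintype.card (p.rootSet ℝ) + 1 ≤ Fintype.card (p.rootSet ℂ))
    (h2 : Fintype.card (p.rootSet ℂ) ≤ Fintype.card (p.rootSet ℝ) + 3) :
    (galActionHom p ℂ (restrict p ℂ (Complex.conjAe.restrictScalars ℚ))).IsSwap := by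
  rw [← Equiv.Perm.card_support_eq_two]
  have hconj : AlgEquiv.restrictScalars ℚ Complex.conjAe ^ 2 = 1 :=
    AlgEquiv.ext Complex.conj_conj
  have heven := Equiv.Perm.two_dvd_card_support
    (σ := galActionHom p ℂ (restrict p ℂ (Complex.conjAe.restrictScalars ℚ)))
    (by rw [← map_pow, ← map_pow, hconj, map_one, map_one])
  have key := card_complex_roots_eq_card_real_add_card_not_gal_inv p
  simp_rw [Set.toFinset_card] at key
  omega

theorem galActionHom_bijective_of_card_rootSet_eq_four {p : ℚ[X]}
    (hcard : Fintype.card (p.rootSet ℂ) = 4) (h12 : 12 ∣ Nat.card p.Gal)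
    (hreal : 0 < Fintype.card (p.rootSet ℝ)) (hreal' : Fintype.card (p.rootSet ℝ) < 4) :
    Function.Bijective (galActionHom p ℂ) := by
  refine ⟨galActionHom_injective p ℂ, MonoidHom.range_eq_top.mp ?_⟩
  have hrange : Nat.card (galActionHom p ℂ).range = Nat.card p.Gal :=
    (Nat.card_congr (MonoidHom.ofInjective (galActionHom_injective p ℂ)).toEquiv).symm
  have hperm : Nat.card (Equiv.Perm (p.rootSet ℂ)) = 24 := by
    rw [Nat.card_perm, Nat.card_eq_fintype_card, hcard]
    rfl
  have hindex : (galActionHom p ℂ).range.index ≤ 2 := by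
    have hmul := (galActionHom p ℂ).range.index_mul_card
    rw [hrange, hperm] at hmul
    have := Nat.le_of_dvd Nat.card_pos h12
    nlinarith
  exact Equiv.Perm.eq_top_of_index_le_two_of_isSwap_mem hindex
    (isSwap_galActionHom_conj (by omega) (by omega)) ⟨_, rfl⟩

end Polynomial.Gal

theorem map_X_pow_four_sub_X_sub_one {K : Type*} [CommRing K] (φ : ℚ →+* K) :
    (X ^ 4 - X - 1 : ℚ[X]).map φ = X ^ 4 + C (-1) * X + C (-1) := by
  simp only [Polynomial.map_sub, Polynomial.map_pow, map_X, Polynomial.map_one, map_neg, map_one]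
  ring

theorem natDegree_X_pow_four_sub_X_sub_one : (X ^ 4 - X - 1 : ℚ[X]).natDegree = 4 := by
  compute_degree!

theorem irreducible_X_pow_four_sub_X_sub_one : Irreducible (X ^ 4 - X - 1 : ℚ[X]) :=
  X_pow_sub_X_sub_one_irreducible_rat (by norm_num)

theorem natDegree_X_pow_three_add_four_mul_X_sub_one :
    (X ^ 3 + 4 * X - 1 : ℚ[X]).natDegree = 3 := by
  compute_degree!

theorem irreducible_X_pow_three_add_four_mul_X_sub_one :
    Irreducible (X ^ 3 + 4 * X - 1 : ℚ[X]) := by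
  refine irreducible_of_degree_le_three_of_not_isRoot
    (by rw [natDegree_X_pow_three_add_four_mul_X_sub_one]; decide) fun x hx ↦ ?_
  obtain ⟨m, rfl, hm⟩ := exists_integer_of_is_root_of_monic (A := ℤ)
    (p := X ^ 3 + 4 * X - 1) (by monicity!) (r := x) (by simpa [map_ofNat] using hx)
  have hunit : IsUnit m := isUnit_of_dvd_one (by simpa using hm)
  rcases Int.isUnit_iff.mp hunit with rfl | rfl <;> norm_num at hx

theorem twelve_dvd_finrank_splittingField :
    12 ∣ Module.finrank ℚ (X ^ 4 - X - 1 : ℚ[X]).SplittingField := by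
  have hs := SplittingField.splits (X ^ 4 - X - 1 : ℚ[X])
  have h4 := irreducible_X_pow_four_sub_X_sub_one.natDegree_dvd_finrank hs
  rw [natDegree_X_pow_four_sub_X_sub_one] at h4
  rw [map_X_pow_four_sub_X_sub_one] at hs
  obtain ⟨a, b, c, d, h⟩ := hs.exists_eq_mul_X_sub_C_of_natDegree_eq_four
    (by monicity!) (by compute_degree!)
  have hroot : aeval (a * b + c * d) (X ^ 3 + 4 * X - 1 : ℚ[X]) = 0 := by
    simp only [aeval_sub, map_add, map_pow, aeval_X, map_mul, map_one, map_ofNat]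
    linear_combination depressed_quartic_resolvent h
  have h3 := irreducible_X_pow_three_add_four_mul_X_sub_one.natDegree_dvd_finrank_of_aeval_eq_zero
    hroot
  rw [natDegree_X_pow_three_add_four_mul_X_sub_one] at h3
  exact Nat.Coprime.mul_dvd_of_dvd_of_dvd (by norm_num) h3 h4

theorem card_rootSet_complex_X_pow_four_sub_X_sub_one :
    Fintype.card ((X ^ 4 - X - 1 : ℚ[X]).rootSet ℂ) = 4 := by
  rw [card_rootSet_eq_natDegree irreducible_X_pow_four_sub_X_sub_one.separable
    (IsAlgClosed.splits _), natDegree_X_pow_four_sub_X_sub_one]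

theorem card_rootSet_real_X_pow_four_sub_X_sub_one_pos :
    0 < Fintype.card ((X ^ 4 - X - 1 : ℚ[X]).rootSet ℝ) := by
  have hcont : ContinuousOn (fun x : ℝ ↦ aeval x (X ^ 4 - X - 1 : ℚ[X])) (Set.Icc 0 2) :=
    (Polynomial.continuous_aeval _).continuousOn
  obtain ⟨r, -, hr⟩ := intermediate_value_Icc (by norm_num : (0 : ℝ) ≤ 2) hcont
    (by norm_num : (0 : ℝ) ∈ Set.Icc (aeval (0 : ℝ) (X ^ 4 - X - 1 : ℚ[X])) (aeval 2 _))
  exact Fintype.card_pos_iff.mpr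
    ⟨r, mem_rootSet.mpr ⟨irreducible_X_pow_four_sub_X_sub_one.ne_zero, hr⟩⟩

theorem card_rootSet_real_X_pow_four_sub_X_sub_one_lt :
    Fintype.card ((X ^ 4 - X - 1 : ℚ[X]).rootSet ℝ) < 4 := by
  by_contra! h
  refine not_splits_depressed_quartic_real (p := -1) (by norm_num : (-1 : ℝ) ≠ 0) ?_
  rw [← map_X_pow_four_sub_X_sub_one]
  exact splits_of_natDegree_le_card_rootSet (by rwa [natDegree_X_pow_four_sub_X_sub_one])

/-- The Galois group of `X⁴ − X − 1` over `ℚ` is isomorphic to the symmetric group `S₄`. -/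
theorem stmt11 :
    Nonempty (((X : Polynomial ℚ) ^ 4 - X - 1).Gal ≃* Equiv.Perm (Fin 4)) := by
  have hbij := Gal.galActionHom_bijective_of_card_rootSet_eq_four
    card_rootSet_complex_X_pow_four_sub_X_sub_one
    (Gal.card_of_separable irreducible_X_pow_four_sub_X_sub_one.separable ▸
      twelve_dvd_finrank_splittingField)
    card_rootSet_real_X_pow_four_sub_X_sub_one_pos card_rootSet_real_X_pow_four_sub_X_sub_one_lt
  exact ⟨(MulEquiv.ofBijective _ hbij).trans
    (Fintype.equivFinOfCardEq card_rootSet_complex_X_pow_four_sub_X_sub_one).permCongrHom⟩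
end
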